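/- There exist exactly two elements j of the field ℚ(√509) satisfying 11⁵·j = −2140988208276499951039156514868631437312 ± 94897633897841092841200334676012564480·√509, and each such j is not rational (i.e., j ∉ ℚ). -/

import Mathlib

theorem Set.ncard_setOf_mul_eq_or_mul_eq {K : Type*} [Field K] {c x y : K} (hc : c ≠ 0)
    (hxy : x ≠ y) : {j : K | c * j = x ∨ c * j = y}.ncard = 2 := by
  have hset : {j : K | c * j = x ∨ c * j = y} = {x / c, y / c} := by
    ext j
    simp [eq_div_iff hc, mul_comm, eq_comm]
  rw [hset, Set.ncard_pair]
  exact fun h => hxy ((div_left_inj' hc).mp h)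

theorem Irrational.ratCast_add_ratCast_mul {s : ℝ} (hs : Irrational s) (a : ℚ) {b : ℚ}
    (hb : b ≠ 0) : Irrational (a + b * s) :=
  (hs.ratCast_mul hb).ratCast_add a

theorem Irrational.ratCast_sub_ratCast_mul {s : ℝ} (hs : Irrational s) (a : ℚ) {b : ℚ}
    (hb : b ≠ 0) : Irrational (a - b * s) :=
  (hs.ratCast_mul hb).ratCast_sub a

theorem ncard_eq_two_and_irrational_of_mul_eq_add_or_sub {s : ℝ} (hs : Irrational s)
    {c a b : ℚ} (hc : c ≠ 0) (hb : b ≠ 0) :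
    {j : ℝ | c * j = a + b * s ∨ c * j = a - b * s}.ncard = 2 ∧
      ∀ j : ℝ, (c * j = a + b * s ∨ c * j = a - b * s) → Irrational j := by
  refine ⟨Set.ncard_setOf_mul_eq_or_mul_eq (by exact_mod_cast hc) fun h => ?_, ?_⟩
  · have hbs : (b : ℝ) * s ≠ 0 := mul_ne_zero (by exact_mod_cast hb) hs.ne_zero
    exact hbs (by linarith)
  · rintro j (h | h) <;> apply Irrational.of_ratCast_mul c <;> rw [h]
    · exact hs.ratCast_add_ratCast_mul a hb
    · exact hs.ratCast_sub_ratCast_mul a hb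

theorem exceptional_j_invariants_125 :
    ({j : ℝ | 11 ^ 5 * j = -2140988208276499951039156514868631437312
        + 94897633897841092841200334676012564480 * Real.sqrt 509 ∨
      11 ^ 5 * j = -2140988208276499951039156514868631437312
        - 94897633897841092841200334676012564480 * Real.sqrt 509}).ncard = 2 ∧
    ∀ j : ℝ, (11 ^ 5 * j = -2140988208276499951039156514868631437312
        + 94897633897841092841200334676012564480 * Real.sqrt 509 ∨
      11 ^ 5 * j = -2140988208276499951039156514868631437312
        - 94897633897841092841200334676012564480 * Real.sqrt 509) →
      Irrational j := by
  have hs : Irrational (Real.sqrt 509) := by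
    simpa using (by norm_num : Nat.Prime 509).irrational_sqrt
  have key := ncard_eq_two_and_irrational_of_mul_eq_add_or_sub hs
    (c := 11 ^ 5) (a := -2140988208276499951039156514868631437312)
    (b := 94897633897841092841200334676012564480) (by norm_num) (by norm_num)
  push_cast at key
  exact key
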